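/- Let α = u + vζ₃ ∈ Z₃[ζ₃] be a unit with α ≡ 1 (mod √(−3)), where √(−3) = 1 + 2ζ₃. Write α = 1 + 3k + ℓ√(−3) with k, ℓ ∈ Z₃, and assume Norm(α) := α·σ(α) ≡ 1 (mod 9) where σ(ζ₃) = ζ₃². Then ℓ² ≡ k (mod 3), and regarding α in Z₃[ζ₉] with π = 1 − ζ₉, α ≡ (1 + ℓπ − (ℓ+k)π²)³ (mod π⁹), i.e., α is a cube modulo π⁹. -/

import Mathlib

/-!
Put `π = 1 - ζ`. The relation `ζ⁶ + ζ³ + 1 = 0`, rewritten in `π`, reads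
`3 + π⁶ = 3π³(1 - 2π + 2π²) + 9π(…)`; feeding it back into itself gives `π⁶ ∣ 3` and then `3 ≡ -π⁶ (mod π⁹)`. Modulo `π⁹` we therefore have
`3π³ = 0`, `√(−3) = 1 + 2ζ³ ≡ π³ - π⁶ - π⁷ + π⁸`, and expanding the cube,
`α - (1 + ℓπ - (ℓ+k)π²)³ ≡ (ℓ - ℓ³)π³ + ((ℓ+k)³ - (ℓ+k))π⁶ + (ℓ² - k)π⁸`.
All three coefficients are divisible by `3` (Fermat's little theorem in `ℤ₃`, and `ℓ² ≡ k`, which is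
the norm condition `9 ∣ 3(ℓ² - k) + 9(k + k²)`), so the right-hand side vanishes.
-/

noncomputable section
abbrev K9 := CyclotomicField 9 ℚ_[3]
instance : Algebra ℤ_[3] K9 := ((algebraMap ℚ_[3] K9).comp (algebraMap ℤ_[3] ℚ_[3])).toAlgebra
abbrev R9 := integralClosure ℤ_[3] K9

theorem PadicInt.dvd_pow_sub_self {p : ℕ} [Fact p.Prime] (a : ℤ_[p]) :
    (p : ℤ_[p]) ∣ a ^ p - a := by
  have hker : a ^ p - a ∈ RingHom.ker (PadicInt.toZMod : ℤ_[p] →+* ZMod p) := by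
    rw [RingHom.mem_ker, map_sub, map_pow, ZMod.pow_card, sub_self]
  rwa [PadicInt.ker_toZMod, PadicInt.maximalIdeal_eq_span_p, Ideal.mem_span_singleton] at hker

theorem three_dvd_sq_sub_of_nine_dvd {R : Type*} [CommRing R] [IsDomain R] [CharZero R] {k l : R}
    (h : 9 ∣ (1 + 3 * k) ^ 2 + 3 * l ^ 2 - 1) : 3 ∣ l ^ 2 - k := by
  have hsplit : (1 + 3 * k) ^ 2 + 3 * l ^ 2 - 1 = 3 * (l ^ 2 - k) + 3 * 3 * (k + k ^ 2) := by ring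
  rw [hsplit, show (9 : R) = 3 * 3 by norm_num] at h
  exact (mul_dvd_mul_iff_left (by norm_num)).mp ((dvd_add_left (dvd_mul_right _ _)).mp h)

theorem ofNat_dvd_map {R S F : Type*} [Semiring R] [Semiring S] [FunLike F R S]
    [RingHomClass F R S] (f : F) (n : ℕ) [n.AtLeastTwo] {a : R} (h : (OfNat.ofNat n : R) ∣ a) :
    (OfNat.ofNat n : S) ∣ f a :=
  map_ofNat f n ▸ map_dvd f h

theorem pow_dvd_of_eq_mul_add {R : Type*} [CommRing R] {a x g c : R} {n : ℕ}
    (h : a = x * g * a + x ^ n * c) : x ^ n ∣ a := by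
  suffices ∀ m ≤ n, x ^ m ∣ a from this n le_rfl
  intro m hm
  induction m with
  | zero => exact (pow_zero x).symm ▸ one_dvd a
  | succ m ih =>
    obtain ⟨b, hb⟩ := ih (by omega)
    rw [h, hb]
    exact dvd_add ⟨g * b, by ring⟩ (dvd_mul_of_dvd_left (pow_dvd_pow x hm) c)

theorem IsPrimitiveRoot.pow_six_add_pow_three_add_one {R : Type*} [CommRing R] [IsDomain R]
    {ζ : R} (h : IsPrimitiveRoot ζ 9) : ζ ^ 6 + ζ ^ 3 + 1 = 0 := by
  have h3 := (h.pow_of_dvd (p := 3) (by norm_num) (by norm_num)).geom_sum_eq_zero (by norm_num)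
  simp only [Finset.sum_range_succ, Finset.sum_range_zero] at h3
  linear_combination h3

section
variable {R : Type*} [CommRing R] {ζ : R}

theorem three_add_one_sub_pow_six_eq (hζ : ζ ^ 6 + ζ ^ 3 + 1 = 0) :
    3 + (1 - ζ) ^ 6 = 3 * (1 - ζ) ^ 3 * (1 - 2 * (1 - ζ) + 2 * (1 - ζ) ^ 2)
      + 9 * (1 - ζ) * ζ * (1 - (1 - ζ) + (1 - ζ) ^ 2) := by
  linear_combination hζ

theorem one_sub_pow_six_dvd_three (hζ : ζ ^ 6 + ζ ^ 3 + 1 = 0) : (1 - ζ) ^ 6 ∣ 3 :=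
  pow_dvd_of_eq_mul_add (g := (1 - ζ) ^ 2 * (1 - 2 * (1 - ζ) + 2 * (1 - ζ) ^ 2)
      + 3 * ζ * (1 - (1 - ζ) + (1 - ζ) ^ 2)) (c := -1)
    (by linear_combination three_add_one_sub_pow_six_eq hζ)

theorem one_sub_pow_nine_dvd_three_add (hζ : ζ ^ 6 + ζ ^ 3 + 1 = 0) :
    (1 - ζ) ^ 9 ∣ 3 + (1 - ζ) ^ 6 := by
  obtain ⟨t, ht⟩ := one_sub_pow_six_dvd_three hζ
  rw [three_add_one_sub_pow_six_eq hζ, show (9 : R) = 3 * 3 by norm_num, ht]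
  exact ⟨t * (1 - 2 * (1 - ζ) + 2 * (1 - ζ) ^ 2)
    + (1 - ζ) ^ 4 * t ^ 2 * ζ * (1 - (1 - ζ) + (1 - ζ) ^ 2), by ring⟩

end

section
variable {S : Type*} [CommRing S] {ζ : S}
  (hπ : (1 - ζ) ^ 9 = 0) (h3 : (3 : S) = -(1 - ζ) ^ 6)
include hπ h3

theorem three_mul_one_sub_pow_three_eq_zero : 3 * (1 - ζ) ^ 3 = 0 := by
  linear_combination (1 - ζ) ^ 3 * h3 - hπ

theorem one_add_two_mul_pow_three_eq :
    1 + 2 * ζ ^ 3 = (1 - ζ) ^ 3 - (1 - ζ) ^ 6 - (1 - ζ) ^ 7 + (1 - ζ) ^ 8 := by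
  linear_combination (1 - 2 * (1 - ζ) + 2 * (1 - ζ) ^ 2) * h3
    + (-1 + (1 - ζ) ^ 4 - (1 - ζ) ^ 5) * three_mul_one_sub_pow_three_eq_zero hπ h3

theorem one_add_mul_sub_mul_sq_pow_three_eq (p q : S) :
    (1 + p * (1 - ζ) - q * (1 - ζ) ^ 2) ^ 3
      = 1 + p ^ 3 * (1 - ζ) ^ 3 - q ^ 3 * (1 - ζ) ^ 6 - p * (1 - ζ) ^ 7
        + (q - p ^ 2) * (1 - ζ) ^ 8 := by
  linear_combination (p * (1 - ζ) - q * (1 - ζ) ^ 2 + p ^ 2 * (1 - ζ) ^ 2) * h3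
    + (-2 * p * q + q ^ 2 * (1 - ζ) - p ^ 2 * q * (1 - ζ) + p * q ^ 2 * (1 - ζ) ^ 2)
      * three_mul_one_sub_pow_three_eq_zero hπ h3

theorem eq_cube_of_three_eq_neg_pow_six {k l : S} (hl : 3 ∣ l ^ 3 - l)
    (hlk : 3 ∣ (l + k) ^ 3 - (l + k)) (hk : 3 ∣ l ^ 2 - k) :
    1 + 3 * k + l * (1 + 2 * ζ ^ 3) = (1 + l * (1 - ζ) - (l + k) * (1 - ζ) ^ 2) ^ 3 := by
  obtain ⟨a, ha⟩ := hl
  obtain ⟨b, hb⟩ := hlk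
  obtain ⟨c, hc⟩ := hk
  rw [one_add_two_mul_pow_three_eq hπ h3, one_add_mul_sub_mul_sq_pow_three_eq hπ h3]
  linear_combination k * h3 - (1 - ζ) ^ 3 * ha + (1 - ζ) ^ 6 * hb + (1 - ζ) ^ 8 * hc
    + (-a + b * (1 - ζ) ^ 3 + c * (1 - ζ) ^ 5) * three_mul_one_sub_pow_three_eq_zero hπ h3

end

theorem one_sub_pow_nine_dvd_sub_cube {R : Type*} [CommRing R] {ζ k l : R}
    (h3 : (1 - ζ) ^ 9 ∣ 3 + (1 - ζ) ^ 6) (hl : 3 ∣ l ^ 3 - l)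
    (hlk : 3 ∣ (l + k) ^ 3 - (l + k)) (hk : 3 ∣ l ^ 2 - k) :
    (1 - ζ) ^ 9 ∣
      (1 + 3 * k + l * (1 + 2 * ζ ^ 3)) - (1 + l * (1 - ζ) - (l + k) * (1 - ζ) ^ 2) ^ 3 := by
  let mk := Ideal.Quotient.mk (Ideal.span {(1 - ζ) ^ 9})
  have hπ : (1 - mk ζ) ^ 9 = 0 := by
    rw [← map_one mk, ← map_sub, ← map_pow, Ideal.Quotient.eq_zero_iff_dvd]
  have h3' : (3 : R ⧸ Ideal.span {(1 - ζ) ^ 9}) = -(1 - mk ζ) ^ 6 := by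
    rwa [eq_neg_iff_add_eq_zero, ← map_ofNat mk 3, ← map_one mk, ← map_sub, ← map_pow, ← map_add,
      Ideal.Quotient.eq_zero_iff_dvd]
  rw [← Ideal.Quotient.eq_zero_iff_dvd, map_sub, sub_eq_zero]
  simp only [map_add, map_mul, map_pow, map_sub, map_one]
  rw [map_ofNat mk 3, map_ofNat mk 2]
  simpa using eq_cube_of_three_eq_neg_pow_six hπ h3' (by simpa using ofNat_dvd_map mk 3 hl)
    (by simpa using ofNat_dvd_map mk 3 hlk) (by simpa using ofNat_dvd_map mk 3 hk)

/-- Let α = 1 + 3k + ℓ√(−3) ∈ Z₃[ζ₃] ⊆ Z₃[ζ₉] with √(−3) = 1 + 2ζ₃, ζ₃ = ζ₉³, and suppose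
Norm(α) = (1+3k)² + 3ℓ² ≡ 1 (mod 9). Then ℓ² ≡ k (mod 3) and
α ≡ (1 + ℓπ − (ℓ+k)π²)³ (mod π⁹), i.e. α is a cube mod π⁹ (π = 1 − ζ₉). -/
theorem stmt_18 (ζ : R9) (h : IsPrimitiveRoot ζ 9) (k l : ℤ_[3])
    (hnorm : (9 : ℤ_[3]) ∣ ((1 + 3 * k) ^ 2 + 3 * l ^ 2 - 1)) :
    (3 : ℤ_[3]) ∣ (l ^ 2 - k) ∧
    (1 - ζ) ^ 9 ∣
      ((1 + 3 * algebraMap ℤ_[3] R9 k + algebraMap ℤ_[3] R9 l * (1 + 2 * ζ ^ 3))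
        - (1 + algebraMap ℤ_[3] R9 l * (1 - ζ)
            - algebraMap ℤ_[3] R9 (l + k) * (1 - ζ) ^ 2) ^ 3) := by
  have hk : (3 : ℤ_[3]) ∣ l ^ 2 - k := three_dvd_sq_sub_of_nine_dvd hnorm
  have fermat (a : ℤ_[3]) : (3 : R9) ∣ algebraMap ℤ_[3] R9 a ^ 3 - algebraMap ℤ_[3] R9 a := by
    rw [← map_pow, ← map_sub]
    exact ofNat_dvd_map (algebraMap ℤ_[3] R9) 3 (by exact_mod_cast PadicInt.dvd_pow_sub_self a)
  refine ⟨hk, ?_⟩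
  rw [map_add]
  refine one_sub_pow_nine_dvd_sub_cube
    (one_sub_pow_nine_dvd_three_add h.pow_six_add_pow_three_add_one) (fermat l) ?_ ?_
  · simpa using fermat (l + k)
  · rw [← map_pow, ← map_sub]
    exact ofNat_dvd_map (algebraMap ℤ_[3] R9) 3 hk
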